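/- Let r ≥ 0 be an integer. For every 2×(r+1) real matrix F̂ and every x ∈ [−1, 0], |P_r(F̂)(x)| ≤ 2 C(2r+2, r) ‖F̂‖_max. In particular, sup_{x ∈ [−1,0]} |P_r(F̂)(x)| ≤ 2 C(2r+2, r) ‖F̂‖_max. -/

import Mathlib

open Real Set

noncomputable section

/-- The Hermite basis polynomial
`P_m^0(x) = (1/m!) x^m (1+x)^{r+1} ∑_{n=0}^{r-m} (-x)^n C(r+n, n)`. -/
def P0 (r m : ℕ) (x : ℝ) : ℝ :=
  (1 / (Nat.factorial m) : ℝ) * x ^ m * (1 + x) ^ (r + 1) *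
    ∑ n ∈ Finset.range (r - m + 1), (-x) ^ n * (Nat.choose (r + n) n : ℝ)

/-- The Hermite basis polynomial
`P_m^1(x) = (1/m!) (1+x)^m (-x)^{r+1} ∑_{n=0}^{r-m} (1+x)^n C(r+n, n)`. -/
def P1 (r m : ℕ) (x : ℝ) : ℝ :=
  (1 / (Nat.factorial m) : ℝ) * (1 + x) ^ m * (-x) ^ (r + 1) *
    ∑ n ∈ Finset.range (r - m + 1), (1 + x) ^ n * (Nat.choose (r + n) n : ℝ)

/-- The two-point Hermite interpolation polynomial `P_r(F̂)` of a boundary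
data matrix `F̂`. -/
def Pmat (r : ℕ) (A : Fin 2 → Fin (r + 1) → ℝ) (x : ℝ) : ℝ :=
  ∑ m : Fin (r + 1), A 0 m * P0 r (m : ℕ) x + ∑ m : Fin (r + 1), A 1 m * P1 r (m : ℕ) x

/-- The max-norm of a `2 × (r+1)` matrix. -/
def maxNorm {r : ℕ} (A : Fin 2 → Fin (r + 1) → ℝ) : ℝ :=
  Finset.univ.sup' Finset.univ_nonempty (fun p : Fin 2 × Fin (r + 1) => |A p.1 p.2|)

/- On `[-1, 0]` the three factors `x`, `1 + x`, `-x` have modulus at most `1`, so each basis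
polynomial is bounded by the sum of its binomial weights, which the hockey-stick identity
turns into `C(2r+1-m, r+1)`. Summing over `m` by the same identity gives `C(2r+2, r)` for
each row of `F̂`. -/

lemma sum_range_choose_add_left (r k : ℕ) :
    ∑ n ∈ Finset.range (k + 1), (r + n).choose n = (k + r + 1).choose (r + 1) := by
  rw [← Nat.sum_range_add_choose]
  refine Finset.sum_congr rfl fun n _ => ?_
  rw [← Nat.choose_symm_add, add_comm]

lemma sum_range_choose_sub_add (r : ℕ) :
    ∑ m ∈ Finset.range (r + 1), (r - m + r + 1).choose (r + 1) = (2 * r + 2).choose r := by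
  have reflect := Finset.sum_range_reflect (fun i => (i + r + 1).choose (r + 1)) (r + 1)
  have hockey := Nat.sum_range_add_choose r (r + 1)
  simp only [add_tsub_cancel_right] at reflect
  simp only [← add_assoc] at hockey
  rw [reflect, hockey, show r + r + 1 + 1 = 2 * r + 2 by ring]
  exact Nat.choose_symm_of_eq_add (by ring)

lemma abs_sum_mul_le_mul_sum {ι : Type*} (s : Finset ι) {f g b : ι → ℝ} {M : ℝ}
    (hf : ∀ i ∈ s, |f i| ≤ M) (hg : ∀ i ∈ s, |g i| ≤ b i) :
    |∑ i ∈ s, f i * g i| ≤ M * ∑ i ∈ s, b i := by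
  rw [Finset.mul_sum]
  refine (Finset.abs_sum_le_sum_abs _ _).trans (Finset.sum_le_sum fun i hi => ?_)
  rw [abs_mul]
  exact mul_le_mul (hf i hi) (hg i hi) (abs_nonneg _) ((abs_nonneg _).trans (hf i hi))

lemma abs_hermite_basis_le (r m : ℕ) {a b c : ℝ} (ha : |a| ≤ 1) (hb : |b| ≤ 1) (hc : |c| ≤ 1) :
    |(1 / (Nat.factorial m) : ℝ) * a ^ m * b ^ (r + 1) *
        ∑ n ∈ Finset.range (r - m + 1), c ^ n * (Nat.choose (r + n) n : ℝ)|
      ≤ ((r - m + r + 1).choose (r + 1) : ℝ) := by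
  have hfac : |(1 / (Nat.factorial m) : ℝ)| ≤ 1 := by
    rw [abs_of_nonneg (by positivity), div_le_one (by positivity)]
    exact_mod_cast Nat.factorial_pos m
  have hsum : |∑ n ∈ Finset.range (r - m + 1), c ^ n * (Nat.choose (r + n) n : ℝ)|
      ≤ ((r - m + r + 1).choose (r + 1) : ℝ) := by
    rw [← sum_range_choose_add_left, Nat.cast_sum]
    refine (abs_sum_mul_le_mul_sum _ (fun n _ => ?_) (fun n _ => (Nat.abs_cast _).le)).trans_eq
      (one_mul _)
    rw [abs_pow]
    exact pow_le_one₀ (abs_nonneg c) hc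
  rw [abs_mul, abs_mul, abs_mul, abs_pow, abs_pow]
  calc |(1 / (Nat.factorial m) : ℝ)| * |a| ^ m * |b| ^ (r + 1) * |_|
      ≤ 1 * 1 ^ m * 1 ^ (r + 1) * ((r - m + r + 1).choose (r + 1) : ℝ) := by gcongr
    _ = _ := by ring

lemma abs_le_one_of_mem_Icc {x : ℝ} (hx : x ∈ Icc (-1 : ℝ) 0) : |x| ≤ 1 ∧ |1 + x| ≤ 1 := by
  obtain ⟨h₁, h₀⟩ := hx
  exact ⟨abs_le.2 ⟨h₁, by linarith⟩, abs_le.2 ⟨by linarith, by linarith⟩⟩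

lemma abs_P0_le (r m : ℕ) {x : ℝ} (hx : x ∈ Icc (-1 : ℝ) 0) :
    |P0 r m x| ≤ ((r - m + r + 1).choose (r + 1) : ℝ) := by
  obtain ⟨hx₁, hx₂⟩ := abs_le_one_of_mem_Icc hx
  exact abs_hermite_basis_le r m hx₁ hx₂ (by rwa [abs_neg])

lemma abs_P1_le (r m : ℕ) {x : ℝ} (hx : x ∈ Icc (-1 : ℝ) 0) :
    |P1 r m x| ≤ ((r - m + r + 1).choose (r + 1) : ℝ) := by
  obtain ⟨hx₁, hx₂⟩ := abs_le_one_of_mem_Icc hx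
  exact abs_hermite_basis_le r m hx₂ (by rwa [abs_neg]) hx₂

lemma abs_le_maxNorm {r : ℕ} (A : Fin 2 → Fin (r + 1) → ℝ) (j : Fin 2) (m : Fin (r + 1)) :
    |A j m| ≤ maxNorm A :=
  Finset.le_sup' (fun p : Fin 2 × Fin (r + 1) => |A p.1 p.2|) (Finset.mem_univ (j, m))

lemma maxNorm_nonneg {r : ℕ} (A : Fin 2 → Fin (r + 1) → ℝ) : 0 ≤ maxNorm A :=
  (abs_nonneg _).trans (abs_le_maxNorm A 0 0)

lemma abs_Pmat_le (r : ℕ) (A : Fin 2 → Fin (r + 1) → ℝ) {x : ℝ} (hx : x ∈ Icc (-1 : ℝ) 0) :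
    |Pmat r A x| ≤ 2 * (Nat.choose (2 * r + 2) r : ℝ) * maxNorm A := by
  have row_sum : ∑ m : Fin (r + 1), ((r - m + r + 1).choose (r + 1) : ℝ)
      = ((2 * r + 2).choose r : ℝ) := by
    rw [← Nat.cast_sum, Fin.sum_univ_eq_sum_range (fun m => (r - m + r + 1).choose (r + 1)),
      sum_range_choose_sub_add]
  have row₀ := abs_sum_mul_le_mul_sum Finset.univ (fun m _ => abs_le_maxNorm A 0 m)
    (fun m _ => abs_P0_le r m hx)
  have row₁ := abs_sum_mul_le_mul_sum Finset.univ (fun m _ => abs_le_maxNorm A 1 m)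
    (fun m _ => abs_P1_le r m hx)
  rw [row_sum] at row₀ row₁
  calc |Pmat r A x| ≤ _ := abs_add_le _ _
    _ ≤ _ := add_le_add row₀ row₁
    _ = _ := by ring

/-- Boundedness of the Hermite continuation operator:
`|P_r(F̂)(x)| ≤ 2 C(2r+2, r) ‖F̂‖_max` for all `x ∈ [-1, 0]`, and hence the same
bound holds for the supremum over `[-1,0]`. -/
theorem hermite_operator_bound (r : ℕ) (Fh : Fin 2 → Fin (r + 1) → ℝ) :
    (∀ x ∈ Icc (-1 : ℝ) 0,
      |Pmat r Fh x| ≤ 2 * (Nat.choose (2 * r + 2) r : ℝ) * maxNorm Fh) ∧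
    ⨆ x ∈ Icc (-1 : ℝ) 0, |Pmat r Fh x|
      ≤ 2 * (Nat.choose (2 * r + 2) r : ℝ) * maxNorm Fh := by
  have bound_nonneg : 0 ≤ 2 * (Nat.choose (2 * r + 2) r : ℝ) * maxNorm Fh := by
    have := maxNorm_nonneg Fh
    positivity
  exact ⟨fun _ => abs_Pmat_le r Fh,
    Real.iSup_le (fun x => Real.iSup_le (abs_Pmat_le r Fh) bound_nonneg) bound_nonneg⟩

end
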